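/- arXiv:1507.01048 — 5 statements merged into one kernel-verified Lean document; each statement's English description precedes it below -/
import Mathlib

section
/- For a natural number a and integer k ≥ 1, the alternating sum ∑_{j=0}^{a} (-1)^{a-j} · C(j+k-1, k-1) · C(a-j+k-1, k-1) equals C(a/2+k-1, k-1) if a is even, and 0 if a is odd. -/
/-!
Write `u = 1/(1-X)^n`. Then `u(X) · u(-X)` and `u(X²)` are both inverses of
`(1-X)^n (1+X)^n = (1-X²)^n`, hence equal; comparing coefficients of `X^a` gives the identity.
-/

open PowerSeries Finset

variable {R : Type*} [CommRing R]

theorem invOneSubPow_val_mul_rescale_neg_one_eq_expand (n : ℕ) :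
    (invOneSubPow R n).val * rescale (-1) (invOneSubPow R n).val =
      expand 2 two_ne_zero (invOneSubPow R n).val := by
  set u := (invOneSubPow R n).val
  have hu : (1 - X : R⟦X⟧) ^ n * u = 1 := by
    rw [← invOneSubPow_inv_eq_one_sub_pow]
    exact (invOneSubPow R n).inv_val
  have hneg : (1 + X : R⟦X⟧) ^ n * rescale (-1) u = 1 := by
    simpa [rescale_neg_one_X, sub_eq_add_neg] using congrArg (rescale (-1 : R)) hu
  have hexpand : (1 - X ^ 2 : R⟦X⟧) ^ n * expand 2 two_ne_zero u = 1 := by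
    simpa using congrArg (expand 2 two_ne_zero) hu
  refine left_inv_eq_right_inv ?_ hexpand
  calc u * rescale (-1) u * (1 - X ^ 2) ^ n
      = ((1 - X) ^ n * u) * ((1 + X) ^ n * rescale (-1) u) := by
        rw [show (1 - X ^ 2 : R⟦X⟧) = (1 - X) * (1 + X) by ring, mul_pow]; ring
    _ = 1 := by rw [hu, hneg, one_mul]

theorem sum_range_neg_one_pow_mul_choose_mul_choose (a d : ℕ) :
    ∑ j ∈ range (a + 1), (-1 : R) ^ (a - j) * (j + d).choose d * (a - j + d).choose d =
      if Even a then ((a / 2 + d).choose d : R) else 0 := by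
  have h := congrArg (coeff a) (invOneSubPow_val_mul_rescale_neg_one_eq_expand (R := R) (d + 1))
  rw [coeff_mul, Nat.sum_antidiagonal_eq_sum_range_succ_mk, coeff_expand,
    invOneSubPow_val_succ_eq_mk_add_choose] at h
  simp only [coeff_rescale, coeff_mk, ← even_iff_two_dvd] at h
  rw [Nat.add_comm (a / 2), ← h]
  refine sum_congr rfl fun j _ => ?_
  rw [Nat.add_comm j, Nat.add_comm (a - j)]
  ring

-- For `k = 0` both sides are `choose _ 0 = 1`, despite the truncated subtraction.
theorem Nat.choose_add_sub_one_sub_one (m k : ℕ) :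
    (m + k - 1).choose (k - 1) = (m + (k - 1)).choose (k - 1) := by
  cases k <;> simp

theorem stmt0_general (a k : ℕ) :
    ∑ j ∈ Finset.range (a + 1),
      (-1 : ℝ) ^ (a - j) * ((j + k - 1).choose (k - 1)) * ((a - j + k - 1).choose (k - 1))
    = if Even a then ((a / 2 + k - 1).choose (k - 1) : ℝ) else 0 := by
  simp only [Nat.choose_add_sub_one_sub_one]
  exact sum_range_neg_one_pow_mul_choose_mul_choose a (k - 1)

theorem stmt0 (a k : ℕ) (hk : 1 ≤ k) :
    ∑ j ∈ Finset.range (a + 1),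
      (-1 : ℝ) ^ (a - j) * ((j + k - 1).choose (k - 1)) * ((a - j + k - 1).choose (k - 1))
    = if Even a then ((a / 2 + k - 1).choose (k - 1) : ℝ) else 0 :=
  stmt0_general a k
end

section
/- Let a be an even natural number, λ > 0, and k ≥ 1 an integer. Let X and Y be independent Gamma-distributed random variables, both with shape k and rate λ. Then E[|X - Y|^a] = (a!/λ^a) · Γ(a/2 + k) / (Γ(k) · Γ(a/2 + 1)). -/
/-!
For integer shape `k = K + 1` the moments are `E[X ^ j] = j! * C(K + j, K) / λ ^ j`, so expanding
`(X - Y) ^ n` binomially gives `E[(X - Y) ^ n] = n! / λ ^ n * c n`, where `c n` is the coefficient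
of `t ^ n` in `(1 - t) ^ (-k) * (1 + t) ^ (-k) = (1 - t ^ 2) ^ (-k)`. Hence `c (2 * m) = C(K + m, K)`,
which is `Γ(m + k) / (Γ(k) * Γ(m + 1))`.
-/

open Finset PowerSeries

theorem PowerSeries.invOneSubPow_mul_rescale_neg_one_eq_expand (R : Type*) [CommRing R] (d : ℕ) :
    (invOneSubPow R d).val * rescale (-1) (invOneSubPow R d).val
      = expand 2 two_ne_zero (invOneSubPow R d).val := by
  set f : R⟦X⟧ := (invOneSubPow R d).val
  set e : R⟦X⟧ := expand 2 two_ne_zero f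
  have hf : f * (1 - X) ^ d = 1 := by
    rw [← invOneSubPow_inv_eq_one_sub_pow]
    exact (invOneSubPow R d).val_inv
  have hg : rescale (-1) f * (1 + X) ^ d = 1 := by
    simpa [rescale_X, sub_eq_add_neg] using congrArg (rescale (-1)) hf
  have he : e * ((1 + X) ^ d * (1 - X) ^ d) = 1 := by
    rw [← mul_pow, show (1 + X) * (1 - X) = (1 - X ^ 2 : R⟦X⟧) by ring]
    simpa using congrArg (expand 2 two_ne_zero) hf
  calc f * rescale (-1) f = f * rescale (-1) f * (e * ((1 + X) ^ d * (1 - X) ^ d)) := by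
        rw [he, mul_one]
    _ = e * (f * (1 - X) ^ d) * (rescale (-1) f * (1 + X) ^ d) := by ring
    _ = e := by rw [hf, hg, mul_one, mul_one]

theorem Finset.Nat.sum_antidiagonal_neg_one_pow_mul_choose_mul_choose {R : Type*} [CommRing R]
    (K n : ℕ) :
    ∑ q ∈ antidiagonal n, (-1 : R) ^ q.2 * (K + q.1).choose K * (K + q.2).choose K
      = if 2 ∣ n then ((K + n / 2).choose K : R) else 0 := by
  have hcoeff := congrArg (coeff n) (invOneSubPow_mul_rescale_neg_one_eq_expand R (K + 1))
  rw [invOneSubPow_val_succ_eq_mk_add_choose, coeff_mul, coeff_expand] at hcoeff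
  simpa [coeff_rescale, mul_comm, mul_left_comm, mul_assoc] using hcoeff

open MeasureTheory ProbabilityTheory Real Set
open scoped Nat

theorem Real.Gamma_natCast_add_div_Gamma_mul_Gamma (m K : ℕ) :
    Gamma (m + (K + 1 : ℕ)) / (Gamma (K + 1 : ℕ) * Gamma (m + 1)) = (K + m).choose K := by
  rw [Nat.cast_succ, ← add_assoc, ← Nat.cast_add, Nat.add_comm m K, Gamma_nat_eq_factorial,
    Gamma_nat_eq_factorial, Gamma_nat_eq_factorial, ← Nat.add_choose_mul_factorial_mul_factorial K m,
    Nat.choose_symm_add]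
  push_cast
  field_simp

theorem MeasureTheory.integral_sub_pow_prod {μ ν : Measure ℝ} [SFinite μ] [SFinite ν]
    (hμ : ∀ j, Integrable (fun x ↦ x ^ j) μ) (hν : ∀ j, Integrable (fun y ↦ y ^ j) ν) (n : ℕ) :
    ∫ p : ℝ × ℝ, (p.1 - p.2) ^ n ∂μ.prod ν
      = ∑ q ∈ antidiagonal n, n.choose q.1 * (-1) ^ q.2 * (∫ x, x ^ q.1 ∂μ) * ∫ y, y ^ q.2 ∂ν := by
  have hexpand (p : ℝ × ℝ) : (p.1 - p.2) ^ n
      = ∑ q ∈ antidiagonal n, (n.choose q.1 * (-1) ^ q.2 * p.1 ^ q.1) * p.2 ^ q.2 := by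
    rw [sub_eq_add_neg, (Commute.all _ _).add_pow']
    refine Finset.sum_congr rfl fun q _ ↦ ?_
    rw [neg_pow, nsmul_eq_mul]
    ring
  simp_rw [hexpand]
  rw [integral_finsetSum _ fun q _ ↦ ((hμ q.1).const_mul _).mul_prod (hν q.2)]
  refine Finset.sum_congr rfl fun q _ ↦ ?_
  rw [integral_prod_mul (fun x ↦ (n.choose q.1 : ℝ) * (-1) ^ q.2 * x ^ q.1)
    (fun y ↦ y ^ q.2), integral_const_mul]

namespace ProbabilityTheory

variable {a r : ℝ}

theorem measurable_gammaPDF : Measurable (gammaPDF a r) :=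
  (measurable_gammaPDFReal a r).ennreal_ofReal

theorem integral_gammaMeasure (ha : 0 < a) (hr : 0 < r) (g : ℝ → ℝ) :
    ∫ x, g x ∂gammaMeasure a r = ∫ x in Ioi 0, gammaPDFReal a r x * g x := by
  rw [gammaMeasure, integral_withDensity_eq_integral_toReal_smul measurable_gammaPDF
    (ae_of_all _ fun _ ↦ ENNReal.ofReal_lt_top), ← integral_Ici_eq_integral_Ioi,
    setIntegral_eq_integral_of_forall_compl_eq_zero]
  · simp [gammaPDF, ENNReal.toReal_ofReal (gammaPDFReal_nonneg ha hr _)]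
  · intro x hx
    simp [gammaPDFReal, show ¬ 0 ≤ x from hx]

theorem integrable_gammaMeasure_iff (ha : 0 < a) (hr : 0 < r) {g : ℝ → ℝ} :
    Integrable g (gammaMeasure a r) ↔ IntegrableOn (fun x ↦ gammaPDFReal a r x * g x) (Ioi 0) := by
  rw [gammaMeasure, integrable_withDensity_iff_integrable_smul' measurable_gammaPDF
    (ae_of_all _ fun _ ↦ ENNReal.ofReal_lt_top), ← integrableOn_Ici_iff_integrableOn_Ioi,
    integrableOn_iff_integrable_of_support_subset]
  · simp [gammaPDF, ENNReal.toReal_ofReal (gammaPDFReal_nonneg ha hr _)]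
  · intro x hx
    by_contra h
    simp [gammaPDFReal, show ¬ 0 ≤ x from h] at hx

theorem gammaPDFReal_mul_pow_eqOn (j : ℕ) :
    EqOn (fun x ↦ gammaPDFReal a r x * x ^ j)
      (fun x ↦ r ^ a / Gamma a * (x ^ (a + j - 1) * exp (-(r * x)))) (Ioi 0) := by
  intro x (hx : 0 < x)
  simp only [gammaPDFReal, if_pos hx.le, ← rpow_natCast x j, add_sub_right_comm a, rpow_add hx]
  ring

theorem integrable_pow_gammaMeasure (ha : 0 < a) (hr : 0 < r) (j : ℕ) :
    Integrable (fun x ↦ x ^ j) (gammaMeasure a r) := by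
  rw [integrable_gammaMeasure_iff ha hr]
  refine IntegrableOn.congr_fun ?_ (gammaPDFReal_mul_pow_eqOn j).symm measurableSet_Ioi
  refine Integrable.const_mul ?_ _
  have := integrableOn_rpow_mul_exp_neg_mul_rpow (p := 1) (s := a + j - 1) (b := r)
    (by linarith [(Nat.cast_nonneg j : (0 : ℝ) ≤ j)]) one_pos hr
  simpa [IntegrableOn] using this

theorem integral_pow_gammaMeasure (ha : 0 < a) (hr : 0 < r) (j : ℕ) :
    ∫ x, x ^ j ∂gammaMeasure a r = Gamma (a + j) / (Gamma a * r ^ j) := by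
  have haj : 0 < a + j := by positivity
  rw [integral_gammaMeasure ha hr, setIntegral_congr_fun measurableSet_Ioi
    (gammaPDFReal_mul_pow_eqOn j), integral_const_mul, integral_rpow_mul_exp_neg_mul_Ioi haj hr,
    div_rpow zero_le_one hr.le, one_rpow, rpow_add hr, rpow_natCast]
  field_simp [(Gamma_pos_of_pos ha).ne']

theorem integral_pow_gammaMeasure_natCast_succ (K j : ℕ) (hr : 0 < r) :
    ∫ x, x ^ j ∂gammaMeasure ((K + 1 : ℕ) : ℝ) r = j ! * (K + j).choose K / r ^ j := by
  rw [integral_pow_gammaMeasure (by positivity) hr, Nat.cast_succ, add_right_comm, ← Nat.cast_add,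
    Gamma_nat_eq_factorial, Gamma_nat_eq_factorial,
    ← Nat.add_choose_mul_factorial_mul_factorial K j, Nat.choose_symm_add]
  push_cast
  field_simp

theorem integral_sub_pow_gammaMeasure_prod (K n : ℕ) (hr : 0 < r) :
    ∫ p : ℝ × ℝ, (p.1 - p.2) ^ n
        ∂(gammaMeasure ((K + 1 : ℕ) : ℝ) r).prod (gammaMeasure ((K + 1 : ℕ) : ℝ) r)
      = n ! / r ^ n * if 2 ∣ n then ((K + n / 2).choose K : ℝ) else 0 := by
  have hK : (0 : ℝ) < (K + 1 : ℕ) := by positivity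
  have := isProbabilityMeasure_gammaMeasure hK hr
  rw [integral_sub_pow_prod (integrable_pow_gammaMeasure hK hr) (integrable_pow_gammaMeasure hK hr),
    ← Finset.Nat.sum_antidiagonal_neg_one_pow_mul_choose_mul_choose, Finset.mul_sum]
  refine Finset.sum_congr rfl fun q hq ↦ ?_
  simp only [integral_pow_gammaMeasure_natCast_succ K _ hr]
  rw [← mem_antidiagonal.mp hq, ← Nat.add_choose_mul_factorial_mul_factorial,
    Nat.choose_symm_add (a := q.1), pow_add]
  push_cast
  field_simp

end ProbabilityTheory

theorem stmt5 (a k : ℕ) (ha : Even a) (hk : 1 ≤ k) (lam : ℝ) (hlam : 0 < lam) :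
    ∫ p : ℝ × ℝ, |p.1 - p.2| ^ a
        ∂((gammaMeasure k lam).prod (gammaMeasure k lam))
    = (Nat.factorial a : ℝ) / lam ^ a *
        (Real.Gamma ((a : ℝ) / 2 + k) / (Real.Gamma k * Real.Gamma ((a : ℝ) / 2 + 1))) := by
  obtain ⟨m, rfl⟩ := even_iff_exists_two_mul.mp ha
  obtain ⟨K, rfl⟩ := Nat.exists_eq_add_of_le' hk
  have hm : ((2 * m : ℕ) : ℝ) / 2 = m := by push_cast; ring
  simp_rw [(even_two_mul m).pow_abs, integral_sub_pow_gammaMeasure_prod K (2 * m) hlam, hm,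
    if_pos (dvd_mul_right 2 m), Nat.mul_div_cancel_left m two_pos,
    Real.Gamma_natCast_add_div_Gamma_mul_Gamma]
end

section
/- For natural numbers a and b with 0 ≤ b ≤ (a-1)/2, ∑_{j=0}^{b} C(a, j) · C(a-1-b-j, b-j) equals (2^b / b!) · ∏_{j=1}^{b} (a - (2j-1)) when b ≥ 1, and equals 1 when b = 0. -/
/-!
Substituting `d = a - 2b`, the sum is the coefficient `G(b, d)` of `X^b` in
`(1 + X)^(2b + d) (1 - X)^(-d)`. The identity `(1 + X)^2 = (1 - X)^2 + 4X` gives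
`G(b + 1, d + 2) = G(b + 1, d) + 4 G(b, d + 2)`, a recurrence also satisfied by
`2^b / b! * ∏_{i < b} (d + 2i + 1)`. The two agree for `d = 0`, where `G` is a central binomial
coefficient, and for `d = 1`, where `G` is half of `∑_j C(2b + 1, j) = 2^(2b + 1)`; a double
induction on `b` and `d` does the rest.
-/

open Finset PowerSeries Nat

namespace PowerSeries

variable {R : Type*} [CommRing R]

theorem coeff_one_add_X_pow (n k : ℕ) : coeff k ((1 + X : R⟦X⟧) ^ n) = n.choose k := by
  have h : (1 + X : R⟦X⟧) ^ n = ((1 + Polynomial.X : Polynomial R) ^ n : Polynomial R) := by simp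
  rw [h, Polynomial.coeff_coe, Polynomial.coeff_one_add_X_pow]

-- At `d = 0` the truncated subtraction gives `(n - 1).choose n = if n = 0 then 1 else 0`.
theorem coeff_invOneSubPow (d n : ℕ) :
    coeff n (invOneSubPow R d : R⟦X⟧) = (d + n - 1).choose n := by
  cases d with
  | zero => cases n <;> simp [invOneSubPow_zero, coeff_one]
  | succ d =>
    rw [invOneSubPow_val_succ_eq_mk_add_choose, coeff_mk, Nat.add_right_comm, Nat.add_sub_cancel,
      Nat.choose_symm_add]

end PowerSeries

theorem Nat.factorial_mul_centralBinom (n : ℕ) :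
    n ! * n.centralBinom = 2 ^ n * ∏ i ∈ range n, (2 * i + 1) := by
  induction n with
  | zero => simp
  | succ n ih =>
    rw [factorial_succ, mul_assoc, mul_left_comm, succ_mul_centralBinom_succ, prod_range_succ,
      pow_succ]
    linear_combination 2 * (2 * n + 1) * ih

variable (R : Type*) [CommRing R]

noncomputable def gouldCoeff (b d : ℕ) : R :=
  coeff b ((1 + X : R⟦X⟧) ^ (2 * b + d) * invOneSubPow R d)

variable {R}

theorem sum_choose_mul_choose_eq_gouldCoeff (a b : ℕ) (h : 2 * b ≤ a) :
    ∑ j ∈ range (b + 1), (a.choose j : R) * ((a - 1 - b - j).choose (b - j) : R) =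
      gouldCoeff R b (a - 2 * b) := by
  rw [gouldCoeff, Nat.add_sub_cancel' h, coeff_mul, Nat.sum_antidiagonal_eq_sum_range_succ_mk]
  refine sum_congr rfl fun j hj => ?_
  have hj := mem_range.mp hj
  rw [coeff_one_add_X_pow, coeff_invOneSubPow]
  congr 3
  omega

theorem gouldCoeff_succ_add_two (b d : ℕ) :
    gouldCoeff R (b + 1) (d + 2) = gouldCoeff R (b + 1) d + 4 * gouldCoeff R b (d + 2) := by
  have hinv := one_sub_pow_mul_invOneSubPow_val_add_eq_invOneSubPow_val (S := R) d 2
  set Q : R⟦X⟧ := (invOneSubPow R (d + 2) : R⟦X⟧)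
  have key : (1 + X : R⟦X⟧) ^ (2 * (b + 1) + (d + 2)) * Q =
      (1 + X) ^ (2 * (b + 1) + d) * (invOneSubPow R d : R⟦X⟧) +
        X * (4 * ((1 + X) ^ (2 * b + (d + 2)) * Q)) := by
    rw [← hinv]
    ring
  rw [gouldCoeff, key, map_add, coeff_succ_X_mul, ← map_ofNat (C (R := R)) 4, coeff_C_mul]
  rfl

theorem gouldCoeff_zero_right (b : ℕ) : gouldCoeff R b 0 = b.centralBinom := by
  simp [gouldCoeff, invOneSubPow_zero, coeff_one_add_X_pow, Nat.centralBinom_eq_two_mul_choose]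

theorem gouldCoeff_one_right (b : ℕ) : gouldCoeff R b 1 = 4 ^ b := by
  rw [gouldCoeff, coeff_mul, Nat.sum_antidiagonal_eq_sum_range_succ_mk]
  simp only [coeff_one_add_X_pow, coeff_invOneSubPow, Nat.add_sub_cancel_left, Nat.choose_self,
    Nat.cast_one, mul_one]
  rw [← Nat.cast_sum, Nat.sum_range_choose_halfway, Nat.cast_pow, Nat.cast_ofNat]

theorem gouldCoeff_zero_left (d : ℕ) : gouldCoeff R 0 d = 1 := by
  rw [gouldCoeff, coeff_mul, Nat.antidiagonal_zero, sum_singleton, coeff_one_add_X_pow,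
    coeff_invOneSubPow]
  simp

theorem factorial_mul_gouldCoeff (b d : ℕ) :
    (b ! : R) * gouldCoeff R b d = 2 ^ b * ∏ i ∈ range b, ((d + 2 * i + 1 : ℕ) : R) := by
  induction b generalizing d with
  | zero => simp [gouldCoeff_zero_left]
  | succ b ih =>
    induction d using Nat.twoStepInduction with
    | zero =>
      rw [gouldCoeff_zero_right]
      have h := congrArg (Nat.cast : ℕ → R) (Nat.factorial_mul_centralBinom (b + 1))
      push_cast at h ⊢
      simpa using h
    | one =>
      have hP : ∏ i ∈ range (b + 1), (1 + 2 * i + 1) = 2 ^ (b + 1) * (b + 1)! := by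
        rw [← doubleFactorial_two_mul, doubleFactorial_eq_prod_even]
        exact prod_congr rfl fun i _ => by ring
      rw [gouldCoeff_one_right, ← Nat.cast_prod, hP, show (4 : R) = 2 * 2 by norm_num, mul_pow]
      push_cast
      ring
    | more d hd _ =>
      have hP : ∏ i ∈ range (b + 1), ((d + 2 * i + 1 : ℕ) : R) =
          (d + 1) * ∏ i ∈ range b, ((d + 2 + 2 * i + 1 : ℕ) : R) := by
        rw [prod_range_succ']
        push_cast
        ring_nf
      rw [gouldCoeff_succ_add_two, mul_add, hd, hP, prod_range_succ, Nat.factorial_succ,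
        Nat.cast_mul]
      linear_combination (norm := (push_cast; ring)) (4 * ((b : R) + 1)) * ih (d + 2)

theorem prod_Icc_sub_two_mul_sub_one (a b : ℕ) (h : 2 * b ≤ a) :
    ∏ j ∈ Icc 1 b, ((a : R) - (2 * j - 1)) = ∏ i ∈ range b, ((a - 2 * b + 2 * i + 1 : ℕ) : R) := by
  refine prod_nbij' (fun j => b - j) (fun i => b - i) ?_ ?_ ?_ ?_ ?_
  any_goals intro j hj; simp only [mem_Icc, mem_range] at hj ⊢; omega
  intro j hj
  have hj := mem_Icc.mp hj
  rw [show a - 2 * b + 2 * (b - j) + 1 = a - (2 * j - 1) by omega, Nat.cast_sub (by omega),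
    Nat.cast_sub (by omega)]
  push_cast
  ring

theorem stmt10 (a b : ℕ) (hb : b ≤ (a - 1) / 2) :
    ∑ j ∈ Finset.range (b + 1), (a.choose j : ℝ) * ((a - 1 - b - j).choose (b - j) : ℝ)
    = if b = 0 then 1
      else 2 ^ b / (Nat.factorial b : ℝ) * ∏ j ∈ Finset.Icc 1 b, ((a : ℝ) - (2 * j - 1)) := by
  have hab : 2 * b ≤ a := by omega
  rw [sum_choose_mul_choose_eq_gouldCoeff a b hab, prod_Icc_sub_two_mul_sub_one a b hab,
    div_mul_eq_mul_div, ← factorial_mul_gouldCoeff, mul_div_cancel_left₀ _ (by positivity)]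
  split_ifs with hb0
  · rw [hb0, gouldCoeff_zero_left]
  · rfl
end

section
/- Fix a natural number a ≥ 1 and rate λ > 0. Let (X_k) and (Y_k) be the arrival times of two i.i.d. Poisson processes with rate λ (equivalently, X_k and Y_k are independent Gamma(k, λ) random variables for each k, with X_k independent of Y_k). Then ∑_{k=1}^{n} E[|X_k - Y_k|^a] = (a!/λ^a) · (2n/(2+a)) · Γ(n+1+a/2) / (Γ(a/2+1) · Γ(n+1)). -/
/-!
For independent `X, Y` of law `Gamma(m + 1, λ)` one has `E|X - Y|^a = 2 E[(Y - X)₊^a]`.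
Substituting `y = x + u` in the inner integral and expanding `(x + u)^m` binomially turns every
integral into one of the form `∫₀^∞ t^n e^{-r t} dt = n! / r^(n+1)`, so that
`E|X - Y|^a = (m!² λ^a)⁻¹ · ∑ⱼ C(m, j) (a + m - j)! (m + j)! / 2^(m+j)`.
A Wilf–Zeilberger certificate shows that this sum is multiplied by `(m + 1)(m + 1 + a/2)` when
`m` increases by one, whence `E|X - Y|^a = a!/λ^a · Γ(m + 1 + a/2) / (Γ(a/2 + 1) Γ(m + 1))`.
Summing over the shapes telescopes, again by `Γ(x + 1) = x Γ(x)`.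
-/

open MeasureTheory ProbabilityTheory Real Set
open scoped ENNReal Nat

lemma integrableOn_Ioi_pow_mul_exp_neg_mul (n : ℕ) {r : ℝ} (hr : 0 < r) :
    IntegrableOn (fun x : ℝ => x ^ n * exp (-(r * x))) (Ioi 0) := by
  simpa [rpow_natCast] using integrableOn_rpow_mul_exp_neg_mul_rpow (s := n) (p := 1)
    (by linarith [n.cast_nonneg (α := ℝ)]) one_pos hr

lemma integral_Ioi_pow_mul_exp_neg_mul (n : ℕ) {r : ℝ} (hr : 0 < r) :
    ∫ x in Ioi (0 : ℝ), x ^ n * exp (-(r * x)) = n ! / r ^ (n + 1) := by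
  have h := integral_rpow_mul_exp_neg_mul_Ioi (a := n + 1) (by positivity) hr
  simp only [add_sub_cancel_right, rpow_natCast] at h
  rw [h, Gamma_nat_eq_factorial, ← Nat.cast_succ, rpow_natCast, one_div, inv_pow, inv_mul_eq_div]

lemma setLIntegral_Ioi_sum_mul_pow_mul_exp_neg_mul {ι : Type*} (s : Finset ι) {K : ι → ℝ}
    (hK : ∀ i ∈ s, 0 ≤ K i) (n : ι → ℕ) {r : ℝ} (hr : 0 < r) :
    ∫⁻ x in Ioi (0 : ℝ), ENNReal.ofReal (∑ i ∈ s, K i * (x ^ n i * exp (-(r * x))))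
      = ENNReal.ofReal (∑ i ∈ s, K i * ((n i)! / r ^ (n i + 1))) := by
  have hint : ∀ i ∈ s, IntegrableOn (fun x : ℝ => K i * (x ^ n i * exp (-(r * x)))) (Ioi 0) :=
    fun i _ => (integrableOn_Ioi_pow_mul_exp_neg_mul (n i) hr).const_mul _
  rw [← ofReal_integral_eq_lintegral_ofReal (integrable_finsetSum s hint),
    integral_finsetSum s hint]
  · simp_rw [integral_const_mul, integral_Ioi_pow_mul_exp_neg_mul _ hr]
  · filter_upwards [ae_restrict_mem measurableSet_Ioi] with x (hx : 0 < x)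
    exact Finset.sum_nonneg fun i hi => mul_nonneg (hK i hi) (by positivity)

lemma lintegral_eq_setLIntegral_Ioi_of_forall_neg {g : ℝ → ℝ≥0∞}
    (hg : ∀ x < 0, g x = 0) :
    ∫⁻ x, g x = ∫⁻ x in Ioi 0, g x := by
  rw [setLIntegral_congr Ioi_ae_eq_Ici, setLIntegral_eq_of_support_subset]
  intro x hx
  by_contra h
  exact hx (hg x (not_le.mp h))

lemma gammaPDF_natCast_succ (m : ℕ) (r : ℝ) {x : ℝ} (hx : 0 ≤ x) :
    gammaPDF (m + 1 : ℕ) r x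
      = ENNReal.ofReal (r ^ (m + 1) / m ! * (x ^ m * exp (-(r * x)))) := by
  rw [gammaPDF_of_nonneg hx]
  congr 1
  push_cast
  rw [add_sub_cancel_right, Gamma_nat_eq_factorial, ← Nat.cast_succ, rpow_natCast, rpow_natCast,
    mul_assoc]

lemma lintegral_gammaMeasure (a r : ℝ) (f : ℝ → ℝ≥0∞) :
    ∫⁻ x, f x ∂gammaMeasure a r = ∫⁻ x, gammaPDF a r x * f x :=
  lintegral_withDensity_eq_lintegral_mul_non_measurable _
    (measurable_gammaPDFReal a r).ennreal_ofReal (ae_of_all _ fun _ => ENNReal.ofReal_lt_top) f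

lemma lintegral_prod_ofReal_abs_sub_pow (μ : Measure ℝ) [SFinite μ] {a : ℕ} (ha : a ≠ 0) :
    ∫⁻ p, ENNReal.ofReal (|p.1 - p.2| ^ a) ∂μ.prod μ
      = 2 * ∫⁻ x, ∫⁻ y, ENNReal.ofReal (max (y - x) 0 ^ a) ∂μ ∂μ := by
  have hsplit : ∀ x y : ℝ, ENNReal.ofReal (|x - y| ^ a)
      = ENNReal.ofReal (max (y - x) 0 ^ a) + ENNReal.ofReal (max (x - y) 0 ^ a) := by
    intro x y
    rcases le_total x y with h | h
    · rw [abs_of_nonpos (by linarith), max_eq_left (by linarith), max_eq_right (by linarith),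
        zero_pow ha, ENNReal.ofReal_zero, add_zero, neg_sub]
    · rw [abs_of_nonneg (by linarith), max_eq_right (by linarith), max_eq_left (by linarith),
        zero_pow ha, ENNReal.ofReal_zero, zero_add]
  rw [lintegral_prod _ (by fun_prop), two_mul]
  simp_rw [hsplit]
  rw [lintegral_congr fun x => lintegral_add_left (by fun_prop) _, lintegral_add_left (by fun_prop),
    lintegral_lintegral_swap (f := fun x y => ENNReal.ofReal (max (x - y) 0 ^ a)) (by fun_prop)]

lemma lintegral_gammaMeasure_ofReal_max_sub_pow {a : ℕ} (ha : a ≠ 0) (m : ℕ) {r : ℝ}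
    (hr : 0 < r) {x : ℝ} (hx : 0 ≤ x) :
    ∫⁻ y, ENNReal.ofReal (max (y - x) 0 ^ a) ∂gammaMeasure (m + 1 : ℕ) r
      = ENNReal.ofReal (∑ j ∈ Finset.range (m + 1), r ^ (m + 1) / m ! * exp (-(r * x)) *
          m.choose j * x ^ j * ((a + (m - j))! / r ^ (a + (m - j) + 1))) := by
  rw [lintegral_gammaMeasure, ← lintegral_add_right_eq_self _ x]
  simp only [add_sub_cancel_right]
  rw [lintegral_eq_setLIntegral_Ioi_of_forall_neg
      (fun u hu => by rw [max_eq_right hu.le, zero_pow ha, ENNReal.ofReal_zero, mul_zero]),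
    ← setLIntegral_Ioi_sum_mul_pow_mul_exp_neg_mul _ (fun j _ => by positivity) _ hr]
  refine setLIntegral_congr_fun measurableSet_Ioi fun u (hu : 0 < u) => ?_
  rw [gammaPDF_natCast_succ m r (by positivity), max_eq_left hu.le,
    ← ENNReal.ofReal_mul (by positivity)]
  congr 1
  rw [add_comm u x, add_pow, mul_add, neg_add, exp_add, Finset.sum_mul, Finset.mul_sum,
    Finset.sum_mul]
  refine Finset.sum_congr rfl fun j _ => ?_
  ring

lemma lintegral_gammaMeasure_lintegral_ofReal_max_sub_pow {a : ℕ} (ha : a ≠ 0) (m : ℕ)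
    {r : ℝ} (hr : 0 < r) :
    ∫⁻ x, ∫⁻ y, ENNReal.ofReal (max (y - x) 0 ^ a)
        ∂gammaMeasure (m + 1 : ℕ) r ∂gammaMeasure (m + 1 : ℕ) r
      = ENNReal.ofReal (∑ j ∈ Finset.range (m + 1), (r ^ (m + 1) / m !) ^ 2 * m.choose j *
          ((a + (m - j))! / r ^ (a + (m - j) + 1)) * ((m + j)! / (2 * r) ^ (m + j + 1))) := by
  rw [lintegral_gammaMeasure, lintegral_eq_setLIntegral_Ioi_of_forall_neg
      (fun x hx => by rw [gammaPDF_of_neg hx, zero_mul]),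
    ← setLIntegral_Ioi_sum_mul_pow_mul_exp_neg_mul _ (fun j _ => by positivity) (fun j => m + j)
      (by positivity : (0 : ℝ) < 2 * r)]
  refine setLIntegral_congr_fun measurableSet_Ioi fun x (hx : 0 < x) => ?_
  rw [lintegral_gammaMeasure_ofReal_max_sub_pow ha m hr hx.le, gammaPDF_natCast_succ m r hx.le,
    ← ENNReal.ofReal_mul (by positivity)]
  congr 1
  have hexp : exp (-(2 * r * x)) = exp (-(r * x)) * exp (-(r * x)) := by
    rw [← exp_add]
    ring_nf
  rw [Finset.mul_sum, hexp]
  refine Finset.sum_congr rfl fun j _ => ?_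
  ring

noncomputable def absMomentSummand (a m j : ℕ) : ℝ :=
  m.choose j * (a + (m - j))! * (m + j)! / 2 ^ (m + j)

-- A Wilf–Zeilberger certificate: summing `absMomentSummand_succ_add_absMomentCert` over `j`
-- telescopes.
noncomputable def absMomentCert (a m j : ℕ) : ℝ :=
  j * (m + 1).choose j * (a + (m + 1 - j))! * (m + j)! / 2 ^ (m + j)

lemma absMomentSummand_succ_add_absMomentCert (a : ℕ) {m j : ℕ} (hj : j ≤ m + 1) :
    absMomentSummand a (m + 1) j + absMomentCert a m (j + 1)
      = (m + 1) * (a + 2 * m + 2) / 2 * absMomentSummand a m j + absMomentCert a m j := by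
  unfold absMomentSummand absMomentCert
  rcases Nat.lt_or_ge m j with hmj | hjm
  · obtain rfl : j = m + 1 := by omega
    rw [show m + 1 + (m + 1) = m + (m + 1) + 1 by ring, Nat.factorial_succ (m + (m + 1)),
      pow_succ]
    simp only [Nat.choose_succ_self, Nat.choose_self, Nat.sub_self, add_zero, Nat.cast_zero,
      Nat.cast_one, zero_mul, zero_div, mul_one]
    push_cast
    field_simp
    ring
  · obtain ⟨d, rfl⟩ := Nat.exists_eq_add_of_le hjm
    have hB1 : ((j + d + 1).choose j : ℝ) = (j + d).choose j * (j + d + 1) / (d + 1) := by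
      rw [eq_div_iff (by positivity)]
      have h := Nat.choose_mul_succ_eq (j + d) j
      rw [show j + d + 1 - j = d + 1 by omega] at h
      exact_mod_cast h.symm
    have hB2 : ((j + d + 1).choose (j + 1) : ℝ) = (j + d).choose j * (j + d + 1) / (j + 1) := by
      rw [eq_div_iff (by positivity)]
      exact_mod_cast (Nat.add_one_mul_choose_eq (j + d) j).symm.trans (mul_comm _ _)
    rw [hB1, hB2, show j + d + 1 - j = d + 1 by omega, show j + d - j = d by omega,
      show j + d + 1 - (j + 1) = d by omega, show a + (d + 1) = a + d + 1 by ring,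
      show j + d + 1 + j = j + d + j + 1 by ring, show j + d + (j + 1) = j + d + j + 1 by ring,
      Nat.factorial_succ (a + d), Nat.factorial_succ (j + d + j), pow_succ]
    push_cast
    field_simp
    ring

lemma sum_absMomentSummand_succ (a m : ℕ) :
    ∑ j ∈ Finset.range (m + 2), absMomentSummand a (m + 1) j
      = (m + 1) * (a + 2 * m + 2) / 2 * ∑ j ∈ Finset.range (m + 1), absMomentSummand a m j := by
  have hcert : ∑ j ∈ Finset.range (m + 2), absMomentCert a m (j + 1)
      = ∑ j ∈ Finset.range (m + 2), absMomentCert a m j := by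
    have hbot : absMomentCert a m 0 = 0 := by simp [absMomentCert]
    have htop : absMomentCert a m (m + 2) = 0 := by simp [absMomentCert, Nat.choose_succ_self]
    rw [← add_zero (∑ j ∈ _, _), ← hbot, ← Finset.sum_range_succ', Finset.sum_range_succ,
      htop, add_zero]
  have htop : absMomentSummand a m (m + 1) = 0 := by simp [absMomentSummand, Nat.choose_succ_self]
  have h := Finset.sum_congr rfl fun j (hj : j ∈ Finset.range (m + 2)) =>
    absMomentSummand_succ_add_absMomentCert a (Nat.lt_succ_iff.mp (Finset.mem_range.mp hj))
  rw [Finset.sum_add_distrib, Finset.sum_add_distrib, hcert, ← Finset.mul_sum,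
    Finset.sum_range_succ (absMomentSummand a m) (m + 1), htop, add_zero] at h
  exact add_right_cancel h

lemma sum_absMomentSummand (a m : ℕ) :
    ∑ j ∈ Finset.range (m + 1), absMomentSummand a m j
      = a ! * m ! * (Gamma (m + 1 + a / 2) / Gamma (a / 2 + 1)) := by
  induction m with
  | zero =>
    have : Gamma (1 + a / 2) ≠ 0 := (Gamma_pos_of_pos (by positivity)).ne'
    simp [absMomentSummand, add_comm, this]
  | succ m ih =>
    have hpos : (0 : ℝ) < m + 1 + a / 2 := by positivity
    rw [sum_absMomentSummand_succ, ih,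
      show ((m + 1 : ℕ) : ℝ) + 1 + a / 2 = m + 1 + a / 2 + 1 by push_cast; ring,
      Gamma_add_one hpos.ne', Nat.factorial_succ]
    push_cast
    ring

theorem integral_abs_sub_pow_gammaMeasure_prod {a : ℕ} (ha : a ≠ 0) {r : ℝ} (hr : 0 < r)
    {k : ℕ} (hk : k ≠ 0) :
    ∫ p : ℝ × ℝ, |p.1 - p.2| ^ a ∂(gammaMeasure k r).prod (gammaMeasure k r)
      = a ! / r ^ a * (Gamma (k + a / 2) / (Gamma (a / 2 + 1) * Gamma k)) := by
  obtain ⟨m, rfl⟩ : ∃ m, k = m + 1 := ⟨k - 1, by omega⟩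
  have := isProbabilityMeasure_gammaMeasure (a := (m + 1 : ℕ)) (by positivity) hr
  have hterm : ∀ j ∈ Finset.range (m + 1), (r ^ (m + 1) / m !) ^ 2 * m.choose j *
      ((a + (m - j))! / r ^ (a + (m - j) + 1)) * ((m + j)! / (2 * r) ^ (m + j + 1))
        = absMomentSummand a m j / (2 * m ! ^ 2 * r ^ a) := by
    intro j hj
    obtain ⟨d, rfl⟩ := Nat.exists_eq_add_of_le (Nat.lt_succ_iff.mp (Finset.mem_range.mp hj))
    rw [absMomentSummand, Nat.add_sub_cancel_left]
    field_simp
    ring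
  rw [integral_eq_lintegral_of_nonneg_ae (ae_of_all _ fun p => by positivity) (by fun_prop),
    lintegral_prod_ofReal_abs_sub_pow _ ha,
    lintegral_gammaMeasure_lintegral_ofReal_max_sub_pow ha m hr, ENNReal.toReal_mul,
    ENNReal.toReal_ofNat, ENNReal.toReal_ofReal (by positivity), Finset.sum_congr rfl hterm,
    ← Finset.sum_div, sum_absMomentSummand]
  push_cast
  rw [Gamma_nat_eq_factorial]
  field_simp

lemma sum_Icc_Gamma_add_div_Gamma {b : ℝ} (hb : -1 < b) (n : ℕ) :
    ∑ k ∈ Finset.Icc 1 n, Gamma (k + b) / Gamma k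
      = n / (1 + b) * (Gamma (n + 1 + b) / Gamma (n + 1)) := by
  induction n with
  | zero => simp
  | succ n ih =>
    have hpos : (0 : ℝ) < n + 1 + b := by linarith [n.cast_nonneg (α := ℝ)]
    rw [Finset.sum_Icc_succ_top (by omega), ih]
    push_cast
    rw [show (n : ℝ) + 1 + 1 + b = n + 1 + b + 1 by ring, Gamma_add_one hpos.ne',
      Gamma_add_one (s := n + 1) (by positivity)]
    have : Gamma (n + 1) ≠ 0 := (Gamma_pos_of_pos (by positivity)).ne'
    have : 1 + b ≠ 0 := by linarith
    field_simp
    ring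

theorem stmt14 (a : ℕ) (ha : 1 ≤ a) (lam : ℝ) (hlam : 0 < lam) (n : ℕ) :
    ∑ k ∈ Finset.Icc 1 n,
        ∫ p : ℝ × ℝ, |p.1 - p.2| ^ a
          ∂((gammaMeasure k lam).prod (gammaMeasure k lam))
    = (Nat.factorial a : ℝ) / lam ^ a * (2 * n / (2 + a)) *
        (Real.Gamma ((n : ℝ) + 1 + a / 2) /
          (Real.Gamma ((a : ℝ) / 2 + 1) * Real.Gamma ((n : ℝ) + 1))) := by
  rw [Finset.sum_congr rfl fun k hk => integral_abs_sub_pow_gammaMeasure_prod (by omega) hlam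
      (by rw [Finset.mem_Icc] at hk; omega), ← Finset.mul_sum]
  simp_rw [div_mul_eq_div_div_swap]
  have hb : (-1 : ℝ) < a / 2 := by linarith [(by positivity : (0 : ℝ) ≤ a / 2)]
  rw [← Finset.sum_div, sum_Icc_Gamma_add_div_Gamma hb n]
  field_simp
end

section
/- For a fixed real b ≥ 1, let X_1,...,X_n and Y_1,...,Y_n be the first n arrival times of two i.i.d. Poisson processes with rate λ = n. Then the expected cost ∑_{k=1}^{n} E[|X_k - Y_k|^b] of the matching {X_k, Y_k} is Θ(n^{1 - b/2}); that is, there exist constants 0 < c ≤ C such that c·n^{1-b/2} ≤ ∑_{k=1}^{n} E[|X_k - Y_k|^b] ≤ C·n^{1-b/2} for all n ≥ 1. -/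
/-!
Write `Z = |X - Y|` for independent `X, Y ~ Gamma(a, r)` and `σ = √a / r`; both bounds say
`E Z ^ b ≍ σ ^ b` uniformly in `a ≥ 1`, and summing `k ^ (b / 2) / n ^ b` over `k ≤ n` gives
`n ^ (1 - b / 2)`.

Upper bound: `|z| ^ b ≤ (b / (t e)) ^ b (e ^ (t z) + e ^ (-t z))`, and the moment generating
function of `X - Y` is `(r² / (r² - t²)) ^ a`, which Bernoulli's inequality bounds by `4 / 3` at
`t = r / (2 √a)`.

Lower bound: `E Z² = 2 σ²` exactly, and integrating the pointwise inequality
`2 Z² ≤ l Z + Z³ / l` against the upper bound for `E Z³` forces `E Z ≳ σ`; Jensen's inequality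
then gives `E Z ^ b ≥ (E Z) ^ b`.
-/

open MeasureTheory ProbabilityTheory Real
open scoped ENNReal

lemma rpow_le_div_exp_one_rpow_mul_exp {u b : ℝ} (hu : 0 ≤ u) (hb : 0 < b) :
    u ^ b ≤ (b / exp 1) ^ b * exp u := by
  -- `y e^{-y} ≤ e^{-1}` at `y = u / b`, raised to the power `b`
  have hy := mul_exp_neg_le_exp_neg_one (u / b)
  have hu' : u = b * (u / b * exp (-(u / b))) * exp (u / b) := by
    rw [mul_assoc, mul_assoc, ← exp_add, neg_add_cancel, exp_zero, mul_one]; field_simp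
  calc u ^ b = (b * (u / b * exp (-(u / b)))) ^ b * exp (u / b) ^ b := by
        rw [← mul_rpow (by positivity) (by positivity), ← hu']
    _ ≤ (b / exp 1) ^ b * exp u := by
        rw [← exp_mul, div_mul_cancel₀ _ hb.ne']
        gcongr
        calc b * (u / b * exp (-(u / b))) ≤ b * exp (-1) := by gcongr
          _ = b / exp 1 := by rw [exp_neg, div_eq_mul_inv]

lemma abs_rpow_le_mul_exp_add_exp (z : ℝ) {t b : ℝ} (ht : 0 < t) (hb : 0 < b) :
    |z| ^ b ≤ (b / (t * exp 1)) ^ b * (exp (t * z) + exp (-t * z)) := by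
  have hexp : exp (t * |z|) ≤ exp (t * z) + exp (-t * z) := by
    rcases abs_cases z with ⟨hz, -⟩ | ⟨hz, -⟩ <;> rw [hz]
    · linarith [exp_pos (-t * z)]
    · rw [mul_neg, ← neg_mul]; linarith [exp_pos (t * z)]
  calc |z| ^ b = t⁻¹ ^ b * (t * |z|) ^ b := by
        rw [← mul_rpow (by positivity) (by positivity), inv_mul_cancel_left₀ ht.ne']
    _ ≤ t⁻¹ ^ b * ((b / exp 1) ^ b * exp (t * |z|)) := by
        gcongr; exact rpow_le_div_exp_one_rpow_mul_exp (by positivity) hb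
    _ = (b / (t * exp 1)) ^ b * exp (t * |z|) := by
        rw [← mul_assoc, ← mul_rpow (by positivity) (by positivity)]; congr 2; field_simp
    _ ≤ (b / (t * exp 1)) ^ b * (exp (t * z) + exp (-t * z)) := by gcongr

lemma lintegral_exp_mul_sub_prod {μ : Measure ℝ} [SFinite μ] (t : ℝ) :
    ∫⁻ p : ℝ × ℝ, ENNReal.ofReal (exp (t * (p.1 - p.2))) ∂μ.prod μ
      = (∫⁻ x, ENNReal.ofReal (exp (t * x)) ∂μ) * ∫⁻ x, ENNReal.ofReal (exp (-t * x)) ∂μ := by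
  have hsplit : ∀ p : ℝ × ℝ, ENNReal.ofReal (exp (t * (p.1 - p.2)))
      = ENNReal.ofReal (exp (t * p.1)) * ENNReal.ofReal (exp (-t * p.2)) := fun p => by
    rw [← ENNReal.ofReal_mul (exp_pos _).le, ← exp_add]; ring_nf
  simp_rw [hsplit]
  exact lintegral_prod_mul (f := fun x => ENNReal.ofReal (exp (t * x)))
    (g := fun y => ENNReal.ofReal (exp (-t * y))) (by fun_prop) (by fun_prop)

lemma lintegral_abs_sub_rpow_prod_le {μ : Measure ℝ} [SFinite μ] {t b : ℝ} (ht : 0 < t)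
    (hb : 0 < b) :
    ∫⁻ p : ℝ × ℝ, ENNReal.ofReal (|p.1 - p.2| ^ b) ∂μ.prod μ
      ≤ 2 * ENNReal.ofReal ((b / (t * exp 1)) ^ b) *
        ((∫⁻ x, ENNReal.ofReal (exp (t * x)) ∂μ) * ∫⁻ x, ENNReal.ofReal (exp (-t * x)) ∂μ) := by
  set C := (b / (t * exp 1)) ^ b
  calc ∫⁻ p : ℝ × ℝ, ENNReal.ofReal (|p.1 - p.2| ^ b) ∂μ.prod μ
      ≤ ∫⁻ p : ℝ × ℝ, ENNReal.ofReal C * (ENNReal.ofReal (exp (t * (p.1 - p.2)))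
          + ENNReal.ofReal (exp (-t * (p.1 - p.2)))) ∂μ.prod μ := by
        refine lintegral_mono fun p => ?_
        rw [← ENNReal.ofReal_add (exp_pos _).le (exp_pos _).le,
          ← ENNReal.ofReal_mul (by positivity)]
        exact ENNReal.ofReal_le_ofReal (abs_rpow_le_mul_exp_add_exp _ ht hb)
    _ = _ := by
        rw [lintegral_const_mul _ (by fun_prop), lintegral_add_left (by fun_prop),
          lintegral_exp_mul_sub_prod, lintegral_exp_mul_sub_prod, neg_neg, mul_comm (∫⁻ _, _ ∂μ),
          ← two_mul]
        ring

lemma integral_sub_sq_prod_self {μ : Measure ℝ} [IsProbabilityMeasure μ]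
    (h1 : Integrable (fun x => x) μ) (h2 : Integrable (fun x => x ^ 2) μ) :
    ∫ p : ℝ × ℝ, (p.1 - p.2) ^ 2 ∂μ.prod μ = 2 * (∫ x, x ^ 2 ∂μ - (∫ x, x ∂μ) ^ 2) := by
  have hx2 : Integrable (fun p : ℝ × ℝ => p.1 ^ 2) (μ.prod μ) := h2.comp_fst μ
  have hy2 : Integrable (fun p : ℝ × ℝ => p.2 ^ 2) (μ.prod μ) := h2.comp_snd μ
  have hxy : Integrable (fun p : ℝ × ℝ => 2 * (p.1 * p.2)) (μ.prod μ) :=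
    (h1.mul_prod h1).const_mul 2
  have hexpand : (fun p : ℝ × ℝ => (p.1 - p.2) ^ 2)
      = fun p => p.1 ^ 2 + p.2 ^ 2 - 2 * (p.1 * p.2) := by
    funext p; ring
  rw [hexpand, integral_sub (f := fun p : ℝ × ℝ => p.1 ^ 2 + p.2 ^ 2) (hx2.add hy2) hxy,
    integral_add hx2 hy2, integral_const_mul, integral_prod_mul (f := fun x => x) (g := fun x => x),
    integral_fun_fst (f := fun x => x ^ 2), integral_fun_snd (f := fun x => x ^ 2)]
  simp only [probReal_univ, one_smul]
  ring

lemma two_mul_integral_sq_le {Ω : Type*} [MeasurableSpace Ω] {μ : Measure Ω} {Z : Ω → ℝ}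
    (hZ : 0 ≤ Z) (h1 : Integrable Z μ) (h3 : Integrable (fun ω => Z ω ^ 3) μ) {l : ℝ}
    (hl : 0 < l) :
    2 * ∫ ω, Z ω ^ 2 ∂μ ≤ l * ∫ ω, Z ω ∂μ + (∫ ω, Z ω ^ 3 ∂μ) / l := by
  have hpt : ∀ ω, 2 * Z ω ^ 2 ≤ l * Z ω + Z ω ^ 3 / l := fun ω => by
    rw [← sub_nonneg, show l * Z ω + Z ω ^ 3 / l - 2 * Z ω ^ 2 = Z ω * (l - Z ω) ^ 2 / l by
      field_simp; ring]
    exact div_nonneg (mul_nonneg (hZ ω) (sq_nonneg _)) hl.le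
  rw [← integral_const_mul, ← integral_const_mul, ← integral_div, ← integral_add
    (h1.const_mul l) (h3.div_const l)]
  exact integral_mono_of_nonneg (ae_of_all _ fun ω => by have := hZ ω; positivity)
    ((h1.const_mul l).add (h3.div_const l)) (ae_of_all _ hpt)

lemma rpow_integral_le_integral_rpow {Ω : Type*} [MeasurableSpace Ω] {μ : Measure Ω}
    [IsProbabilityMeasure μ] {f : Ω → ℝ} {b : ℝ} (hf0 : 0 ≤ᵐ[μ] f) (hf : Integrable f μ)
    (hfb : Integrable (fun ω => f ω ^ b) μ) (hb : 1 ≤ b) :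
    (∫ ω, f ω ∂μ) ^ b ≤ ∫ ω, f ω ^ b ∂μ :=
  (convexOn_rpow hb).map_integral_le (continuousOn_id.rpow_const fun _ _ => Or.inr (by linarith))
    isClosed_Ici hf0 hf hfb

section Gamma

variable {a r : ℝ}

lemma ae_nonneg_gammaMeasure : ∀ᵐ x ∂gammaMeasure a r, 0 ≤ x := by
  rw [ae_iff, show {x : ℝ | ¬0 ≤ x} = Set.Iio 0 by ext; simp, gammaMeasure,
    withDensity_apply _ measurableSet_Iio]
  exact lintegral_gammaPDF_of_nonpos le_rfl

lemma lintegral_ofReal_gammaMeasure_of_mul_gammaPDFReal_eq {a' r' c : ℝ} (ha' : 0 < a')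
    (hr' : 0 < r') (hc : 0 ≤ c) {g : ℝ → ℝ} (hg : Measurable g) (hg0 : ∀ x, 0 ≤ x → 0 ≤ g x)
    (h : ∀ x, 0 ≤ x → g x * gammaPDFReal a r x = c * gammaPDFReal a' r' x) :
    ∫⁻ x, ENNReal.ofReal (g x) ∂gammaMeasure a r = ENNReal.ofReal c := by
  have hdens : ∀ x,
      gammaPDF a r x * ENNReal.ofReal (g x) = ENNReal.ofReal c * gammaPDF a' r' x := by
    intro x
    rcases lt_or_ge x 0 with hx | hx
    · simp [gammaPDF_of_neg hx]
    · rw [gammaPDF, gammaPDF, mul_comm, ← ENNReal.ofReal_mul (hg0 x hx), h x hx,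
        ENNReal.ofReal_mul hc]
  have hpdf : ∀ a r, Measurable (gammaPDF a r) := fun a r =>
    (measurable_gammaPDFReal a r).ennreal_ofReal
  rw [gammaMeasure, lintegral_withDensity_eq_lintegral_mul _ (hpdf a r) hg.ennreal_ofReal]
  simp_rw [Pi.mul_apply, hdens]
  rw [lintegral_const_mul _ (hpdf a' r'), lintegral_gammaPDF_eq_one ha' hr', mul_one]

lemma lintegral_exp_mul_gammaMeasure (ha : 0 < a) (hr : 0 < r) {t : ℝ} (ht : t < r) :
    ∫⁻ x, ENNReal.ofReal (exp (t * x)) ∂gammaMeasure a r = ENNReal.ofReal ((r / (r - t)) ^ a) := by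
  have hrt : 0 < r - t := by linarith
  have hΓ : Gamma a ≠ 0 := (Gamma_pos_of_pos ha).ne'
  refine lintegral_ofReal_gammaMeasure_of_mul_gammaPDFReal_eq ha hrt (by positivity) (by fun_prop)
    (fun x _ => (exp_pos _).le) fun x hx => ?_
  have hsplit : exp (-(r * x)) = exp (-((r - t) * x)) / exp (t * x) := by
    rw [← exp_sub]; ring_nf
  rw [gammaPDFReal, gammaPDFReal, if_pos hx, if_pos hx, div_rpow hr.le hrt.le, hsplit]
  field_simp

lemma lintegral_pow_gammaMeasure (ha : 0 < a) (hr : 0 < r) {n : ℕ} (hn : n ≠ 0) :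
    ∫⁻ x, ENNReal.ofReal (x ^ n) ∂gammaMeasure a r
      = ENNReal.ofReal (Gamma (a + n) / (Gamma a * r ^ n)) := by
  have han : 0 < a + n := by positivity
  have hΓ : Gamma a ≠ 0 := (Gamma_pos_of_pos ha).ne'
  have hΓn : Gamma (a + n) ≠ 0 := (Gamma_pos_of_pos han).ne'
  refine lintegral_ofReal_gammaMeasure_of_mul_gammaPDFReal_eq han hr (by positivity) (by fun_prop)
    (fun x hx => by positivity) fun x hx => ?_
  have hexp : a + n - 1 = a - 1 + n := by ring
  have hn' : a - 1 + n ≠ 0 := by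
    have : (1 : ℝ) ≤ n := by exact_mod_cast Nat.one_le_iff_ne_zero.mpr hn
    linarith
  rw [gammaPDFReal, gammaPDFReal, if_pos hx, if_pos hx, hexp, rpow_add_natCast' hx hn',
    rpow_add_natCast hr.ne']
  field_simp

lemma integrable_pow_gammaMeasure (ha : 0 < a) (hr : 0 < r) {n : ℕ} (hn : n ≠ 0) :
    Integrable (fun x => x ^ n) (gammaMeasure a r) :=
  (lintegral_ofReal_ne_top_iff_integrable (by fun_prop)
    (ae_nonneg_gammaMeasure.mono fun _ hx => pow_nonneg hx n)).1
    (by rw [lintegral_pow_gammaMeasure ha hr hn]; exact ENNReal.ofReal_ne_top)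

lemma integral_pow_gammaMeasure (ha : 0 < a) (hr : 0 < r) {n : ℕ} (hn : n ≠ 0) :
    ∫ x, x ^ n ∂gammaMeasure a r = Gamma (a + n) / (Gamma a * r ^ n) := by
  have hΓ := Gamma_pos_of_pos ha
  have hΓn : 0 < Gamma (a + n) := Gamma_pos_of_pos (by positivity)
  rw [integral_eq_lintegral_of_nonneg_ae (ae_nonneg_gammaMeasure.mono fun _ hx => pow_nonneg hx n)
    (by fun_prop), lintegral_pow_gammaMeasure ha hr hn, ENNReal.toReal_ofReal (by positivity)]

lemma integral_sub_sq_gammaMeasure_prod (ha : 0 < a) (hr : 0 < r) :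
    ∫ p : ℝ × ℝ, (p.1 - p.2) ^ 2 ∂(gammaMeasure a r).prod (gammaMeasure a r) = 2 * a / r ^ 2 := by
  have := isProbabilityMeasure_gammaMeasure ha hr
  have hΓ : Gamma a ≠ 0 := (Gamma_pos_of_pos ha).ne'
  have h1 := integral_pow_gammaMeasure ha hr one_ne_zero
  have h2 := integral_pow_gammaMeasure ha hr two_ne_zero
  simp only [pow_one, Nat.cast_one, Nat.cast_ofNat] at h1 h2
  rw [integral_sub_sq_prod_self (by simpa using integrable_pow_gammaMeasure ha hr one_ne_zero)
    (integrable_pow_gammaMeasure ha hr two_ne_zero), h1, h2, show a + 2 = a + 1 + 1 by ring,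
    Gamma_add_one (by positivity), Gamma_add_one ha.ne']
  field_simp
  ring

lemma rpow_div_sub_mul_rpow_div_add_le (ha : 1 ≤ a) (hr : 0 < r) {t : ℝ}
    (ht : t ^ 2 = r ^ 2 / (4 * a)) :
    (r / (r - t)) ^ a * (r / (r + t)) ^ a ≤ 4 / 3 := by
  have hq : 1 / (4 * a) ≤ 1 / 4 := one_div_le_one_div_of_le (by norm_num) (by linarith)
  rw [div_eq_mul_one_div] at ht
  have hrt : 0 < r - t := by nlinarith [sq_nonneg (r + t)]
  have hrt' : 0 < r + t := by nlinarith [sq_nonneg (r - t)]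
  have hbernoulli : 3 / 4 ≤ (1 - 1 / (4 * a)) ^ a := by
    have h := one_add_mul_self_le_rpow_one_add (s := -(1 / (4 * a))) (by linarith) ha
    rw [← sub_eq_add_neg] at h
    convert h using 1
    field_simp; ring
  have hprod : r / (r - t) * (r / (r + t)) = (1 - 1 / (4 * a))⁻¹ := by
    rw [div_mul_div_comm, ← sq, show (r - t) * (r + t) = r ^ 2 - t ^ 2 by ring, ht]
    have : 1 - 1 / (4 * a) ≠ 0 := by linarith
    field_simp
  rw [← mul_rpow (by positivity) (by positivity), hprod, inv_rpow (by linarith), ← one_div,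
    div_le_div_iff₀ (by linarith) (by norm_num)]
  linarith

lemma lintegral_abs_sub_rpow_gammaMeasure_prod_le (ha : 1 ≤ a) (hr : 0 < r) {b : ℝ}
    (hb : 0 < b) :
    ∫⁻ p : ℝ × ℝ, ENNReal.ofReal (|p.1 - p.2| ^ b) ∂(gammaMeasure a r).prod (gammaMeasure a r)
      ≤ ENNReal.ofReal (8 / 3 * (2 * b / exp 1) ^ b * a ^ (b / 2) / r ^ b) := by
  have ha0 : 0 < a := by linarith
  have hsa : 0 < √a := sqrt_pos.mpr ha0
  have := isProbabilityMeasure_gammaMeasure ha0 hr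
  -- the scale `t = r / (2 √a)` balances the moment generating function against `(b / t e) ^ b`
  set t := r / (2 * √a) with ht_def
  have ht : 0 < t := by positivity
  have ht2 : t ^ 2 = r ^ 2 / (4 * a) := by rw [div_pow, mul_pow, sq_sqrt ha0.le]; ring
  have htr : t < r := by
    rw [ht_def, div_lt_iff₀ (by positivity)]; nlinarith [sqrt_le_sqrt ha, sqrt_one]
  calc _ ≤ 2 * ENNReal.ofReal ((b / (t * exp 1)) ^ b) *
        ((∫⁻ x, ENNReal.ofReal (exp (t * x)) ∂gammaMeasure a r) *
          ∫⁻ x, ENNReal.ofReal (exp (-t * x)) ∂gammaMeasure a r) :=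
        lintegral_abs_sub_rpow_prod_le ht hb
    _ = ENNReal.ofReal (2 * (b / (t * exp 1)) ^ b * ((r / (r - t)) ^ a * (r / (r + t)) ^ a)) := by
        rw [lintegral_exp_mul_gammaMeasure ha0 hr htr,
          lintegral_exp_mul_gammaMeasure ha0 hr (by linarith), sub_neg_eq_add,
          ENNReal.ofReal_mul (by positivity), ENNReal.ofReal_mul (by positivity),
          ENNReal.ofReal_mul (by positivity), ENNReal.ofReal_ofNat]
    _ ≤ ENNReal.ofReal (2 * (b / (t * exp 1)) ^ b * (4 / 3)) := by
        gcongr; exact rpow_div_sub_mul_rpow_div_add_le ha hr ht2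
    _ = ENNReal.ofReal (8 / 3 * (2 * b / exp 1) ^ b * a ^ (b / 2) / r ^ b) := by
        have hbt : b / (t * exp 1) = 2 * b / exp 1 * (√a / r) := by rw [ht_def]; field_simp
        rw [hbt, mul_rpow (by positivity) (by positivity), div_rpow hsa.le hr.le, sqrt_eq_rpow,
          ← rpow_mul ha0.le]
        ring_nf

lemma integrable_abs_sub_rpow_gammaMeasure_prod (ha : 1 ≤ a) (hr : 0 < r) {b : ℝ} (hb : 0 < b) :
    Integrable (fun p : ℝ × ℝ => |p.1 - p.2| ^ b) ((gammaMeasure a r).prod (gammaMeasure a r)) :=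
  (lintegral_ofReal_ne_top_iff_integrable (by fun_prop (disch := exact hb.le))
    (ae_of_all _ fun _ => by positivity)).1
    (ne_top_of_le_ne_top ENNReal.ofReal_ne_top
      (lintegral_abs_sub_rpow_gammaMeasure_prod_le ha hr hb))

lemma integral_abs_sub_rpow_gammaMeasure_prod_le (ha : 1 ≤ a) (hr : 0 < r) {b : ℝ} (hb : 0 < b) :
    ∫ p : ℝ × ℝ, |p.1 - p.2| ^ b ∂(gammaMeasure a r).prod (gammaMeasure a r)
      ≤ 8 / 3 * (2 * b / exp 1) ^ b * a ^ (b / 2) / r ^ b := by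
  rw [integral_eq_lintegral_of_nonneg_ae (ae_of_all _ fun _ => by positivity)
    (by fun_prop (disch := exact hb.le))]
  exact ENNReal.toReal_le_of_le_ofReal (by positivity)
    (lintegral_abs_sub_rpow_gammaMeasure_prod_le ha hr hb)

lemma le_integral_abs_sub_gammaMeasure_prod (ha : 1 ≤ a) (hr : 0 < r) :
    9 / (8 * (6 / exp 1) ^ 3) * (√a / r)
      ≤ ∫ p : ℝ × ℝ, |p.1 - p.2| ∂(gammaMeasure a r).prod (gammaMeasure a r) := by
  have ha0 : 0 < a := by linarith
  set K : ℝ := 8 / 3 * (6 / exp 1) ^ 3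
  set σ := √a / r
  have hK : 0 < K := by positivity
  have hσ : 0 < σ := by positivity
  have hσ2 : σ ^ 2 = a / r ^ 2 := by rw [div_pow, sq_sqrt ha0.le]
  have hZ3 : ∫ p : ℝ × ℝ, |p.1 - p.2| ^ 3 ∂(gammaMeasure a r).prod (gammaMeasure a r)
      ≤ K * σ ^ 3 := by
    have h := integral_abs_sub_rpow_gammaMeasure_prod_le ha hr (b := (3 : ℕ)) (by norm_num)
    rw [show ((3 : ℕ) : ℝ) / 2 = 1 / 2 * (3 : ℕ) by norm_num, rpow_mul ha0.le, ← sqrt_eq_rpow] at h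
    simp only [rpow_natCast] at h
    convert h using 1
    simp only [σ, K]
    norm_num
    ring
  -- with `l = K σ` the third-moment term is at most `σ²`, a quarter of `2 E Z² = 4 σ²`
  have hZ2 := two_mul_integral_sq_le (μ := (gammaMeasure a r).prod (gammaMeasure a r))
    (Z := fun p => |p.1 - p.2|) (fun _ => abs_nonneg _)
    (by simpa using integrable_abs_sub_rpow_gammaMeasure_prod ha hr one_pos)
    (by simpa using integrable_abs_sub_rpow_gammaMeasure_prod ha hr (b := 3) (by norm_num))
    (mul_pos hK hσ)
  simp only [sq_abs, integral_sub_sq_gammaMeasure_prod ha0 hr] at hZ2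
  rw [mul_div_assoc, ← hσ2] at hZ2
  have hthird : (∫ p : ℝ × ℝ, |p.1 - p.2| ^ 3 ∂(gammaMeasure a r).prod (gammaMeasure a r)) / (K * σ)
      ≤ σ ^ 2 := by
    rw [div_le_iff₀ (by positivity)]; nlinarith
  rw [show 9 / (8 * (6 / exp 1) ^ 3) = 3 / K by simp only [K]; ring, div_mul_eq_mul_div,
    div_le_iff₀ hK]
  nlinarith

lemma le_integral_abs_sub_rpow_gammaMeasure_prod (ha : 1 ≤ a) (hr : 0 < r) {b : ℝ} (hb : 1 ≤ b) :
    (9 / (8 * (6 / exp 1) ^ 3)) ^ b * a ^ (b / 2) / r ^ b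
      ≤ ∫ p : ℝ × ℝ, |p.1 - p.2| ^ b ∂(gammaMeasure a r).prod (gammaMeasure a r) := by
  have ha0 : 0 < a := by linarith
  have := isProbabilityMeasure_gammaMeasure ha0 hr
  have hjensen := rpow_integral_le_integral_rpow (μ := (gammaMeasure a r).prod (gammaMeasure a r))
    (ae_of_all _ fun p => abs_nonneg (p.1 - p.2))
    (by simpa using integrable_abs_sub_rpow_gammaMeasure_prod ha hr one_pos)
    (integrable_abs_sub_rpow_gammaMeasure_prod ha hr (by linarith)) hb
  refine le_trans ?_ hjensen
  calc (9 / (8 * (6 / exp 1) ^ 3)) ^ b * a ^ (b / 2) / r ^ b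
      = (9 / (8 * (6 / exp 1) ^ 3) * (√a / r)) ^ b := by
        rw [mul_rpow (by positivity) (by positivity), div_rpow (by positivity) hr.le, sqrt_eq_rpow,
          ← rpow_mul ha0.le, mul_div_assoc]
        ring_nf
    _ ≤ _ := by
        gcongr
        exact le_integral_abs_sub_gammaMeasure_prod ha hr

end Gamma

lemma sum_Icc_natCast_rpow_le (n : ℕ) {s : ℝ} (hs : 0 ≤ s) :
    ∑ k ∈ Finset.Icc 1 n, (k : ℝ) ^ s ≤ (n : ℝ) ^ (s + 1) := by
  calc ∑ k ∈ Finset.Icc 1 n, (k : ℝ) ^ s ≤ ∑ _k ∈ Finset.Icc 1 n, (n : ℝ) ^ s :=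
        Finset.sum_le_sum fun k hk => by
          gcongr; exact_mod_cast (Finset.mem_Icc.mp hk).2
    _ = (n : ℝ) ^ (s + 1) := by
        rw [Finset.sum_const, Nat.card_Icc, add_tsub_cancel_right, nsmul_eq_mul,
          rpow_add_one' (Nat.cast_nonneg n) (by linarith), mul_comm]

lemma rpow_add_one_div_le_sum_Icc_natCast_rpow (n : ℕ) {s : ℝ} (hs : 0 ≤ s) :
    (n : ℝ) ^ (s + 1) / (s + 1) ≤ ∑ k ∈ Finset.Icc 1 n, (k : ℝ) ^ s := by
  have hmono : MonotoneOn (fun x : ℝ => x ^ s) (Set.Icc 0 (0 + n)) :=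
    fun x hx y _ hxy => rpow_le_rpow hx.1 hxy hs
  have h := hmono.integral_le_sum
  rw [integral_rpow (Or.inl (by linarith)), zero_add, zero_rpow (by linarith), sub_zero] at h
  convert h using 1
  simp_rw [zero_add, Finset.range_eq_Ico, Finset.sum_Ico_add' (fun k : ℕ => (k : ℝ) ^ s)]
  rw [zero_add, Finset.Ico_add_one_right_eq_Icc]

lemma sum_integral_abs_sub_rpow_gammaMeasure_prod_le {b : ℝ} (hb : 0 < b) {n : ℕ} (hn : 0 < n) :
    ∑ k ∈ Finset.Icc 1 n,
        ∫ p : ℝ × ℝ, |p.1 - p.2| ^ b ∂(gammaMeasure k (n : ℝ)).prod (gammaMeasure k (n : ℝ))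
      ≤ 8 / 3 * (2 * b / exp 1) ^ b * (n : ℝ) ^ (1 - b / 2) := by
  have hn' : (0 : ℝ) < n := by exact_mod_cast hn
  set K := 8 / 3 * (2 * b / exp 1) ^ b
  calc _ ≤ ∑ k ∈ Finset.Icc 1 n, K * (k : ℝ) ^ (b / 2) / (n : ℝ) ^ b :=
        Finset.sum_le_sum fun k hk => integral_abs_sub_rpow_gammaMeasure_prod_le
          (by exact_mod_cast (Finset.mem_Icc.mp hk).1) hn' hb
    _ = K / (n : ℝ) ^ b * ∑ k ∈ Finset.Icc 1 n, (k : ℝ) ^ (b / 2) := by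
        rw [Finset.mul_sum]; congr 1 with k; ring
    _ ≤ K / (n : ℝ) ^ b * (n : ℝ) ^ (b / 2 + 1) := by
        gcongr; exact sum_Icc_natCast_rpow_le n (by positivity)
    _ = K * (n : ℝ) ^ (1 - b / 2) := by
        rw [show 1 - b / 2 = b / 2 + 1 - b by ring, rpow_sub hn']; ring

lemma le_sum_integral_abs_sub_rpow_gammaMeasure_prod {b : ℝ} (hb : 1 ≤ b) {n : ℕ} (hn : 0 < n) :
    (9 / (8 * (6 / exp 1) ^ 3)) ^ b / (b / 2 + 1) * (n : ℝ) ^ (1 - b / 2)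
      ≤ ∑ k ∈ Finset.Icc 1 n,
        ∫ p : ℝ × ℝ, |p.1 - p.2| ^ b ∂(gammaMeasure k (n : ℝ)).prod (gammaMeasure k (n : ℝ)) := by
  have hn' : (0 : ℝ) < n := by exact_mod_cast hn
  set c := (9 / (8 * (6 / exp 1) ^ 3)) ^ b
  calc c / (b / 2 + 1) * (n : ℝ) ^ (1 - b / 2)
      = c / (n : ℝ) ^ b * ((n : ℝ) ^ (b / 2 + 1) / (b / 2 + 1)) := by
        rw [show 1 - b / 2 = b / 2 + 1 - b by ring, rpow_sub hn']; ring
    _ ≤ c / (n : ℝ) ^ b * ∑ k ∈ Finset.Icc 1 n, (k : ℝ) ^ (b / 2) := by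
        gcongr; exact rpow_add_one_div_le_sum_Icc_natCast_rpow n (by positivity)
    _ = ∑ k ∈ Finset.Icc 1 n, c * (k : ℝ) ^ (b / 2) / (n : ℝ) ^ b := by
        rw [Finset.mul_sum]; congr 1 with k; ring
    _ ≤ _ :=
        Finset.sum_le_sum fun k hk => le_integral_abs_sub_rpow_gammaMeasure_prod
          (by exact_mod_cast (Finset.mem_Icc.mp hk).1) hn' hb

theorem stmt19 (b : ℝ) (hb : 1 ≤ b) :
    ∃ c C : ℝ, 0 < c ∧ c ≤ C ∧
      ∀ (n : ℕ), 1 ≤ n →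
        c * (n : ℝ) ^ (1 - b / 2) ≤
          (∑ k ∈ Finset.Icc 1 n,
            ∫ p : ℝ × ℝ, |p.1 - p.2| ^ b
              ∂((gammaMeasure k (n : ℝ)).prod (gammaMeasure k (n : ℝ)))) ∧
        (∑ k ∈ Finset.Icc 1 n,
            ∫ p : ℝ × ℝ, |p.1 - p.2| ^ b
              ∂((gammaMeasure k (n : ℝ)).prod (gammaMeasure k (n : ℝ)))) ≤
          C * (n : ℝ) ^ (1 - b / 2) := by
  have hbounds : ∀ n : ℕ, 1 ≤ n → _ ∧ _ := fun n hn =>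
    ⟨le_sum_integral_abs_sub_rpow_gammaMeasure_prod hb hn,
      sum_integral_abs_sub_rpow_gammaMeasure_prod_le (by linarith) hn⟩
  refine ⟨_, _, by positivity, ?_, hbounds⟩
  -- `c ≤ C` follows by comparing the two bounds at `n = 1`
  have h1 := hbounds 1 le_rfl
  simp only [Nat.cast_one, one_rpow, mul_one] at h1
  exact h1.1.trans h1.2
end
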